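/- arXiv:1512.00079 — 2 statements merged into one kernel-verified Lean document; each statement's English description precedes it below -/
import Mathlib

section
/- Let Ω be a set and let β, γ be finitely supported permutations of Ω with β² = γ² = 1 such that the product βγ has order 3 (i.e. (βγ)³ = 1 and βγ ≠ 1). Call a two-element set {x, β(x)} with β(x) ≠ x a transposition-orbit of β, and similarly for γ. Then: (1) every transposition-orbit of β meets at least one and at most two transposition-orbits of γ, and symmetrically every transposition-orbit of γ meets at least one and at most two transposition-orbits of β; (2) for a transposition-orbit T of β and a transposition-orbit T' of γ, T' is the unique transposition-orbit of γ meeting T if and only if T is the unique transposition-orbit of β meeting T'; consequently this correspondence is a bijection from the set of transposition-orbits of β meeting exactly one transposition-orbit of γ onto the set of transposition-orbits of γ meeting exactly one transposition-orbit of β. -/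
/-! ## Houghton's groups: basic setup -/

/-- The underlying set of Houghton's group: `n` rays of discrete points;
`(i, p)` is the point at position `p` on the ray `R_i`. -/
abbrev XH (n : ℕ) : Type := Fin n × ℕ

/-- `g` acts, outside a finite set, as the translation by `m i` on the ray `R_i`. -/
def HasTranslationVector {n : ℕ} (g : Equiv.Perm (XH n)) (m : Fin n → ℤ) : Prop :=
  ∃ K : Finset (XH n), ∀ x : XH n, x ∉ K →
    (g x).1 = x.1 ∧ ((g x).2 : ℤ) = (x.2 : ℤ) + m x.1

/-- An eventual translation of `X_n`. -/
def IsEventualTranslation {n : ℕ} (g : Equiv.Perm (XH n)) : Prop :=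
  ∃ m : Fin n → ℤ, HasTranslationVector g m

/-- Houghton's group `H_n`: the group of all eventual translations of `X_n`. -/
def Houghton (n : ℕ) : Subgroup (Equiv.Perm (XH n)) where
  carrier := {g | IsEventualTranslation g}
  one_mem' := ⟨0, ∅, fun x _ => by simp⟩
  mul_mem' := by
    rintro a b ⟨ma, Ka, hKa⟩ ⟨mb, Kb, hKb⟩
    classical
    refine ⟨ma + mb, Kb ∪ Kb.image b ∪ Ka.image b.symm, fun x hx => ?_⟩
    simp only [Finset.mem_union, not_or] at hx
    have hxb : x ∉ Kb := hx.1.1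
    have hbx : b x ∉ Ka := by
      intro hc
      exact hx.2 (Finset.mem_image.mpr ⟨b x, hc, b.symm_apply_apply x⟩)
    obtain ⟨hb1, hb2⟩ := hKb x hxb
    obtain ⟨ha1, ha2⟩ := hKa (b x) hbx
    refine ⟨?_, ?_⟩
    · show (a (b x)).1 = x.1
      rw [ha1, hb1]
    · show ((a (b x)).2 : ℤ) = (x.2 : ℤ) + (ma + mb) x.1
      rw [ha2, hb1, hb2, Pi.add_apply]
      ring
  inv_mem' := by
    rintro a ⟨m, K, hK⟩
    classical
    refine ⟨-m, K.image a, fun x hx => ?_⟩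
    have hy : a⁻¹ x ∉ K := by
      intro hc
      exact hx (Finset.mem_image.mpr ⟨a⁻¹ x, hc, a.apply_symm_apply x⟩)
    obtain ⟨e1, e2⟩ := hK _ hy
    rw [show a (a⁻¹ x) = x from a.apply_symm_apply x] at e1 e2
    refine ⟨e1.symm, ?_⟩
    rw [← e1] at e2
    rw [Pi.neg_apply]
    omega

/-- The subgroup of finitely supported permutations of `X_n`. -/
def FSymSub (n : ℕ) : Subgroup (Equiv.Perm (XH n)) where
  carrier := {g | {x | g x ≠ x}.Finite}
  one_mem' := by simp
  mul_mem' := by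
    intro a b ha hb
    apply Set.Finite.subset (ha.union hb)
    intro x hx
    by_cases h : b x = x
    · left
      show a x ≠ x
      simpa [Equiv.Perm.mul_apply, h] using hx
    · right; exact h
  inv_mem' := by
    intro a ha
    apply Set.Finite.subset ha
    intro x hx
    show a x ≠ x
    intro hc
    apply hx
    show a⁻¹ x = x
    conv_lhs => rw [← hc]
    exact a.symm_apply_apply x

/-- The subgroup of finitely supported even permutations of `X_n`:
products of an even number of transpositions. -/
def FAltSub (n : ℕ) : Subgroup (Equiv.Perm (XH n)) where
  carrier := {g | ∃ l : List (Equiv.Perm (XH n)),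
    (∀ τ ∈ l, τ.IsSwap) ∧ Even l.length ∧ l.prod = g}
  one_mem' := ⟨[], by simp, by simp, by simp⟩
  mul_mem' := by
    rintro a b ⟨la, hla, hea, rfl⟩ ⟨lb, hlb, heb, rfl⟩
    refine ⟨la ++ lb, ?_, ?_, List.prod_append⟩
    · intro τ hτ
      rcases List.mem_append.mp hτ with h | h
      exacts [hla τ h, hlb τ h]
    · simpa using hea.add heb
  inv_mem' := by
    rintro a ⟨l, hl, he, rfl⟩
    refine ⟨(l.map fun x => x⁻¹).reverse, ?_, by simpa using he,
      (List.prod_inv_reverse l).symm⟩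
    intro τ hτ
    rw [List.mem_reverse, List.mem_map] at hτ
    obtain ⟨σ, hσ, rfl⟩ := hτ
    obtain ⟨x, y, hxy, rfl⟩ := hl σ hσ
    exact ⟨x, y, hxy, by rw [Equiv.swap_inv]⟩

/-- `FSym_n` and `FAlt_n` viewed as subgroups of `H_n`. -/
def FSymIn (n : ℕ) : Subgroup (Houghton n) := (FSymSub n).comap (Houghton n).subtype

def FAltIn (n : ℕ) : Subgroup (Houghton n) := (FAltSub n).comap (Houghton n).subtype

/-- The index of the first ray `R_1`. -/
def ray0 (n : ℕ) (hn : 0 < n) : Fin n := ⟨0, hn⟩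

/-- The underlying function of the generator `g_i`. -/
def gFun (n : ℕ) (hn : 0 < n) (i : Fin n) : XH n → XH n := fun x =>
  if x.1 = ray0 n hn then (if x.2 = 0 then (i, 0) else (ray0 n hn, x.2 - 1))
  else if x.1 = i then (i, x.2 + 1) else x

/-- The inverse of `gFun`. -/
def gInvFun (n : ℕ) (hn : 0 < n) (i : Fin n) : XH n → XH n := fun x =>
  if x.1 = i then (if x.2 = 0 then (ray0 n hn, 0) else (i, x.2 - 1))
  else if x.1 = ray0 n hn then (ray0 n hn, x.2 + 1) else x

/-- The generator `g_i` of `H_n` (as a permutation): it translates the first ray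
down by one, sends `(1,1)` to `(i,1)` and translates the ray `R_i` up by one. -/
def gGen (n : ℕ) (hn : 0 < n) (i : Fin n) (hi : i ≠ ray0 n hn) : Equiv.Perm (XH n) where
  toFun := gFun n hn i
  invFun := gInvFun n hn i
  left_inv := by
    rintro ⟨j, p⟩
    show gInvFun n hn i (gFun n hn i (j, p)) = (j, p)
    simp only [gFun, gInvFun]
    split_ifs <;> simp_all [Prod.ext_iff] <;> omega
  right_inv := by
    rintro ⟨j, p⟩
    show gFun n hn i (gInvFun n hn i (j, p)) = (j, p)
    simp only [gFun, gInvFun]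
    split_ifs <;> simp_all [Prod.ext_iff] <;> omega

/-- The translation vector of `g_i`. -/
def gVec (n : ℕ) (hn : 0 < n) (i : Fin n) : Fin n → ℤ :=
  fun j => if j = ray0 n hn then -1 else if j = i then 1 else 0

theorem gGen_mem (n : ℕ) (hn : 0 < n) (i : Fin n) (hi : i ≠ ray0 n hn) :
    gGen n hn i hi ∈ Houghton n := by
  refine ⟨gVec n hn i, {(ray0 n hn, 0)}, ?_⟩
  rintro ⟨j, p⟩ hx
  rw [Finset.mem_singleton] at hx
  have hx' : j ≠ ray0 n hn ∨ p ≠ 0 := by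
    by_contra h
    push_neg at h
    exact hx (by rw [h.1, h.2])
  show (gFun n hn i (j, p)).1 = j ∧ ((gFun n hn i (j, p)).2 : ℤ) = (p : ℤ) + gVec n hn i j
  simp only [gFun, gVec]
  split_ifs <;> simp_all [Prod.ext_iff] <;> omega

/-- The generator `g_i` as an element of `H_n`. -/
def hGen (n : ℕ) (hn : 0 < n) (i : Fin n) (hi : i ≠ ray0 n hn) : Houghton n :=
  ⟨gGen n hn i hi, gGen_mem n hn i hi⟩

/-- The transposition `α` exchanging `(1,1)` and `(1,2)`. -/
def alphaPerm (n : ℕ) (hn : 0 < n) : Equiv.Perm (XH n) :=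
  Equiv.swap (ray0 n hn, 0) (ray0 n hn, 1)

theorem alphaPerm_mem (n : ℕ) (hn : 0 < n) : alphaPerm n hn ∈ Houghton n := by
  refine ⟨0, {(ray0 n hn, 0), (ray0 n hn, 1)}, ?_⟩
  intro x hx
  simp only [Finset.mem_insert, Finset.mem_singleton, not_or] at hx
  rw [show alphaPerm n hn x = x from Equiv.swap_apply_of_ne_of_ne hx.1 hx.2]
  simp

/-- `α` as an element of `H_n`. -/
def hAlpha (n : ℕ) (hn : 0 < n) : Houghton n := ⟨alphaPerm n hn, alphaPerm_mem n hn⟩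

theorem alphaPerm_mem_FSym (n : ℕ) (hn : 0 < n) : alphaPerm n hn ∈ FSymSub n := by
  show {x | alphaPerm n hn x ≠ x}.Finite
  apply Set.Finite.subset ((Set.finite_singleton (ray0 n hn, 1)).insert (ray0 n hn, 0))
  intro x hx
  by_contra hc
  simp only [Set.mem_insert_iff, Set.mem_singleton_iff, not_or] at hc
  exact hx (Equiv.swap_apply_of_ne_of_ne hc.1 hc.2)

theorem swap_mem_houghton {n : ℕ} (P Q : XH n) : Equiv.swap P Q ∈ Houghton n := by
  classical
  refine ⟨0, {P, Q}, ?_⟩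
  intro x hx
  simp only [Finset.mem_insert, Finset.mem_singleton, not_or] at hx
  rw [Equiv.swap_apply_of_ne_of_ne hx.1 hx.2]
  simp

/-- The transposition exchanging two points, as an element of `H_n`. -/
def hSwap {n : ℕ} (P Q : XH n) : Houghton n := ⟨Equiv.swap P Q, swap_mem_houghton P Q⟩

/-- The set of generators `{g_2, …, g_n}` of `H_n`. -/
def houghtonGensOnly (n : ℕ) (hn : 0 < n) : Set (Houghton n) :=
  {x | ∃ (i : Fin n) (hi : i ≠ ray0 n hn), x = hGen n hn i hi}

/-- The chosen generating set of `H_n`: `{g_2, …, g_n}` for `n ≠ 2`,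
and `{g_2, α}` for `n = 2`. -/
def houghtonGenSet (n : ℕ) (hn : 0 < n) : Set (Houghton n) :=
  if n = 2 then houghtonGensOnly n hn ∪ {hAlpha n hn} else houghtonGensOnly n hn

/-- Word length with respect to a set of generators (and their inverses). -/
noncomputable def wordLength {G : Type*} [Group G] (S : Set G) (g : G) : ℕ :=
  sInf {k | ∃ l : List G, (∀ x ∈ l, x ∈ S ∨ x⁻¹ ∈ S) ∧ l.length = k ∧ l.prod = g}

/-- The growth rate of an endomorphism `φ`:
`GR(φ) = sup_g limsup_k |φ^k(g)|^{1/k}`. -/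
noncomputable def growthRate {G : Type*} [Group G] (S : Set G) (φ : G →* G) : ℝ :=
  ⨆ g : G, Filter.limsup
    (fun k : ℕ => (wordLength S ((⇑φ)^[k] g) : ℝ) ^ (1 / (k : ℝ))) Filter.atTop

/-- The orbit of `x` under the permutation `h`. -/
def permOrbit {α : Type*} (h : Equiv.Perm α) (x : α) : Set α :=
  Set.range (fun k : ℤ => (h ^ k) x)

/-- `x` has infinite orbit under `h` (`x` is an essential point of `h`). -/
def InfiniteOrbit {α : Type*} (h : Equiv.Perm α) (x : α) : Prop :=
  (permOrbit h x).Infinite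

/-- The image `φ(g_i)` as a permutation of `X_n`. -/
def imageGen {n : ℕ} (h0 : 0 < n) (φ : Houghton n →* Houghton n)
    (i : Fin n) (hi : i ≠ ray0 n h0) : Equiv.Perm (XH n) :=
  ↑(φ (hGen n h0 i hi))

/-- The image `φ(α)` as a permutation of `X_n`. -/
def imageAlpha {n : ℕ} (h0 : 0 < n) (φ : Houghton n →* Houghton n) : Equiv.Perm (XH n) :=
  ↑(φ (hAlpha n h0))

/-- A transposition-orbit of an involution: a pair `{x, h x}` with `h x ≠ x`. -/
def TOrbit {Ω : Type*} (h : Equiv.Perm Ω) (T : Set Ω) : Prop :=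
  ∃ x, h x ≠ x ∧ T = {x, h x}

/-- The zero-sum vectors in `ℤ^n`. -/
def zeroSum (n : ℕ) : AddSubgroup (Fin n → ℤ) where
  carrier := {m | ∑ j, m j = 0}
  zero_mem' := by simp
  add_mem' := by
    intro a b ha hb
    simp only [Set.mem_setOf_eq] at *
    simp [Finset.sum_add_distrib, ha, hb]
  neg_mem' := by
    intro a ha
    simp only [Set.mem_setOf_eq] at *
    simp [ha]

/-! For involutions `β`, `γ` with `(β γ)³ = 1`, `γ` fixes `β y` iff `β` fixes `γ y`: evaluate
`(β γ)³ = 1` at `β y`. A `β`-orbit `{x, β x}` meets exactly the `γ`-orbits of its `γ`-moved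
points, hence at most two of them, and at least one because `γ` fixing both `x` and `β x` would
force `β x = x`. If `T' = {y, γ y}` is the only `γ`-orbit meeting `T = {y, β y}` and `β` moves
`γ y`, then `γ` moves `β y`, so `β y ∈ T'`, i.e. `β y = γ y ∈ T`; hence `T` is the only
`β`-orbit meeting `T'`, and the converse follows by symmetry. -/

section TOrbit

open Function

variable {Ω : Type*}

theorem Equiv.Perm.involutive_of_sq_eq_one {h : Equiv.Perm Ω} (h2 : h ^ 2 = 1) :
    Involutive h := fun x => by
  simpa [sq] using congr($h2 x)

theorem mul_rev_pow_three_eq_one {β γ : Equiv.Perm Ω} (hβ : Involutive β) (hγ : Involutive γ)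
    (h3 : (β * γ) ^ 3 = 1) : (γ * β) ^ 3 = 1 := by
  have hinv : γ * β = (β * γ)⁻¹ := by
    ext x
    apply (β * γ).injective
    simp [hγ (β x), hβ x]
  rw [hinv, inv_pow, h3, inv_one]

theorem apply_apply_eq_apply_iff {β γ : Equiv.Perm Ω} (hβ : Involutive β) (hγ : Involutive γ)
    (h3 : (β * γ) ^ 3 = 1) (y : Ω) : γ (β y) = β y ↔ β (γ y) = γ y := by
  suffices key : ∀ {β γ : Equiv.Perm Ω}, Involutive β → Involutive γ → (β * γ) ^ 3 = 1 →
      γ (β y) = β y → β (γ y) = γ y from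
    ⟨key hβ hγ h3, key hγ hβ (mul_rev_pow_three_eq_one hβ hγ h3)⟩
  intro β γ hβ hγ h3 hfix
  -- `β γ` sends `β y` to `y`, so `(β γ)³ (β y) = β y` reads `(β γ)² y = β y`.
  have h := congr($h3 (β y))
  simp only [pow_succ, pow_zero, one_mul, Equiv.Perm.mul_apply, Equiv.Perm.one_apply, hfix,
    hβ y] at h
  have h' := congrArg γ (β.injective h)
  rwa [hγ] at h'

theorem TOrbit.apply_ne {h : Equiv.Perm Ω} (hh : Involutive h) {S : Set Ω} (hS : TOrbit h S)
    {y : Ω} (hy : y ∈ S) : h y ≠ y := by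
  obtain ⟨x, hx, rfl⟩ := hS
  rcases hy with rfl | rfl
  · exact hx
  · rw [hh]
    exact hx.symm

theorem TOrbit.eq_pair {h : Equiv.Perm Ω} (hh : Involutive h) {S : Set Ω} (hS : TOrbit h S)
    {y : Ω} (hy : y ∈ S) : S = {y, h y} := by
  obtain ⟨x, -, rfl⟩ := hS
  rcases hy with rfl | rfl
  · rfl
  · rw [hh, Set.pair_comm]

theorem TOrbit.eq_of_mem_of_mem {h : Equiv.Perm Ω} (hh : Involutive h) {S S' : Set Ω}
    (hS : TOrbit h S) (hS' : TOrbit h S') {y : Ω} (hy : y ∈ S) (hy' : y ∈ S') : S = S' := by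
  rw [hS.eq_pair hh hy, hS'.eq_pair hh hy']

theorem TOrbit.eq_or_eq_or_eq_of_inter_nonempty {h : Equiv.Perm Ω} (hh : Involutive h)
    {a b : Ω} {T1 T2 T3 : Set Ω} (h1 : TOrbit h T1) (h2 : TOrbit h T2) (h3 : TOrbit h T3)
    (n1 : ({a, b} ∩ T1).Nonempty) (n2 : ({a, b} ∩ T2).Nonempty)
    (n3 : ({a, b} ∩ T3).Nonempty) : T1 = T2 ∨ T1 = T3 ∨ T2 = T3 := by
  obtain ⟨w1, hw1 | hw1, hw1T⟩ := n1 <;> obtain ⟨w2, hw2 | hw2, hw2T⟩ := n2 <;>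
    obtain ⟨w3, hw3 | hw3, hw3T⟩ := n3 <;> subst w1 w2 w3 <;>
    first
      | exact Or.inl (h1.eq_of_mem_of_mem hh h2 hw1T hw2T)
      | exact Or.inr (Or.inl (h1.eq_of_mem_of_mem hh h3 hw1T hw3T))
      | exact Or.inr (Or.inr (h2.eq_of_mem_of_mem hh h3 hw2T hw3T))

theorem TOrbit.exists_tOrbit_inter_nonempty {β γ : Equiv.Perm Ω} (hβ : Involutive β)
    (hγ : Involutive γ) (h3 : (β * γ) ^ 3 = 1) {T : Set Ω} (hT : TOrbit β T) :
    ∃ T' : Set Ω, TOrbit γ T' ∧ (T ∩ T').Nonempty := by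
  obtain ⟨x, hx, rfl⟩ := hT
  by_cases hγx : γ x = x
  · have hγβx : γ (β x) ≠ β x := by
      rwa [ne_eq, apply_apply_eq_apply_iff hβ hγ h3, hγx]
    exact ⟨{β x, γ (β x)}, ⟨β x, hγβx, rfl⟩, β x, Or.inr rfl, Or.inl rfl⟩
  · exact ⟨{x, γ x}, ⟨x, hγx, rfl⟩, x, Or.inl rfl, Or.inl rfl⟩

/-- When `T'` is an `h`-orbit, this says that `T'` is the only `h`-orbit meeting `T`. -/
def MeetsOnlyOrbit (h : Equiv.Perm Ω) (T T' : Set Ω) : Prop :=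
  (T ∩ T').Nonempty ∧ ∀ z ∈ T, h z ≠ z → z ∈ T'

theorem setOf_tOrbit_inter_nonempty_eq_singleton_iff {h : Equiv.Perm Ω} (hh : Involutive h)
    {T T' : Set Ω} (hT' : TOrbit h T') :
    {S : Set Ω | TOrbit h S ∧ (T ∩ S).Nonempty} = {T'} ↔ MeetsOnlyOrbit h T T' := by
  constructor
  · intro hset
    have hmem : ∀ S, TOrbit h S → (T ∩ S).Nonempty → S = T' := fun S hS hTS =>
      (Set.ext_iff.mp hset S).mp ⟨hS, hTS⟩
    refine ⟨(Set.ext_iff.mp hset T').mpr rfl |>.2, fun z hz hhz => ?_⟩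
    rw [← hmem {z, h z} ⟨z, hhz, rfl⟩ ⟨z, hz, Or.inl rfl⟩]
    exact Or.inl rfl
  · rintro ⟨hmeet, hmoved⟩
    ext S
    refine ⟨fun ⟨hS, z, hzT, hzS⟩ => ?_, fun hS => hS ▸ ⟨hT', hmeet⟩⟩
    exact hS.eq_of_mem_of_mem hh hT' hzS (hmoved z hzT (hS.apply_ne hh hzS))

theorem MeetsOnlyOrbit.symm {β γ : Equiv.Perm Ω} (hβ : Involutive β) (hγ : Involutive γ)
    (h3 : (β * γ) ^ 3 = 1) {T T' : Set Ω} (hT : TOrbit β T) (hT' : TOrbit γ T')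
    (hTT' : MeetsOnlyOrbit γ T T') : MeetsOnlyOrbit β T' T := by
  obtain ⟨⟨y, hyT, hyT'⟩, hmoved⟩ := hTT'
  refine ⟨⟨y, hyT', hyT⟩, fun z hz hβz => ?_⟩
  rw [hT'.eq_pair hγ hyT'] at hz
  rcases hz with rfl | rfl
  · exact hyT
  · have hγβy : γ (β y) ≠ β y := by rwa [ne_eq, apply_apply_eq_apply_iff hβ hγ h3]
    have hβyT' := hmoved (β y) (by rw [hT.eq_pair hβ hyT]; exact Or.inr rfl) hγβy
    rw [hT'.eq_pair hγ hyT'] at hβyT'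
    rcases hβyT' with hβy | hβy
    · exact absurd hβy (hT.apply_ne hβ hyT)
    · rw [hT.eq_pair hβ hyT, ← hβy]
      exact Or.inr rfl

end TOrbit

theorem involutions_order_three_transposition_orbits_general
    {Ω : Type*} (β γ : Equiv.Perm Ω)
    (hβ2 : β ^ 2 = 1) (hγ2 : γ ^ 2 = 1)
    (h3 : (β * γ) ^ 3 = 1) :
    (∀ T : Set Ω, TOrbit β T →
      (∃ T' : Set Ω, TOrbit γ T' ∧ (T ∩ T').Nonempty) ∧
      (∀ T1 T2 T3 : Set Ω, TOrbit γ T1 → TOrbit γ T2 → TOrbit γ T3 →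
        (T ∩ T1).Nonempty → (T ∩ T2).Nonempty → (T ∩ T3).Nonempty →
        T1 = T2 ∨ T1 = T3 ∨ T2 = T3)) ∧
    (∀ T' : Set Ω, TOrbit γ T' →
      (∃ T : Set Ω, TOrbit β T ∧ (T ∩ T').Nonempty) ∧
      (∀ T1 T2 T3 : Set Ω, TOrbit β T1 → TOrbit β T2 → TOrbit β T3 →
        (T1 ∩ T').Nonempty → (T2 ∩ T').Nonempty → (T3 ∩ T').Nonempty →
        T1 = T2 ∨ T1 = T3 ∨ T2 = T3)) ∧
    (∀ T T' : Set Ω, TOrbit β T → TOrbit γ T' →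
      ({S : Set Ω | TOrbit γ S ∧ (T ∩ S).Nonempty} = {T'} ↔
       {S : Set Ω | TOrbit β S ∧ (S ∩ T').Nonempty} = {T})) := by
  have hβ := Equiv.Perm.involutive_of_sq_eq_one hβ2
  have hγ := Equiv.Perm.involutive_of_sq_eq_one hγ2
  have h3' := mul_rev_pow_three_eq_one hβ hγ h3
  refine ⟨fun T hT => ⟨hT.exists_tOrbit_inter_nonempty hβ hγ h3, ?_⟩,
    fun T' hT' => ⟨?_, ?_⟩, fun T T' hT hT' => ?_⟩
  · obtain ⟨x, -, rfl⟩ := hT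
    exact fun _ _ _ hT1 hT2 hT3 => TOrbit.eq_or_eq_or_eq_of_inter_nonempty hγ hT1 hT2 hT3
  · obtain ⟨T, hT, hTT'⟩ := hT'.exists_tOrbit_inter_nonempty hγ hβ h3'
    exact ⟨T, hT, Set.inter_comm T' T ▸ hTT'⟩
  · obtain ⟨x, -, rfl⟩ := hT'
    intro _ _ _ hT1 hT2 hT3 n1 n2 n3
    rw [Set.inter_comm] at n1 n2 n3
    exact TOrbit.eq_or_eq_or_eq_of_inter_nonempty hβ hT1 hT2 hT3 n1 n2 n3
  · simp_rw [Set.inter_comm _ T']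
    rw [setOf_tOrbit_inter_nonempty_eq_singleton_iff hγ hT',
      setOf_tOrbit_inter_nonempty_eq_singleton_iff hβ hT]
    exact ⟨MeetsOnlyOrbit.symm hβ hγ h3 hT hT', MeetsOnlyOrbit.symm hγ hβ h3' hT' hT⟩

/-- Let `β, γ` be finitely supported involutions whose product
`βγ` has order `3`.  Then every transposition-orbit of `β` meets at least one
and at most two transposition-orbits of `γ` (and symmetrically), and a
transposition-orbit `T'` of `γ` is the unique one meeting a transposition-orbit
`T` of `β` iff `T` is the unique transposition-orbit of `β` meeting `T'`. -/
theorem involutions_order_three_transposition_orbits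
    {Ω : Type*} (β γ : Equiv.Perm Ω)
    (hβf : {x | β x ≠ x}.Finite) (hγf : {x | γ x ≠ x}.Finite)
    (hβ2 : β ^ 2 = 1) (hγ2 : γ ^ 2 = 1)
    (h3 : (β * γ) ^ 3 = 1) (hne : β * γ ≠ 1) :
    (∀ T : Set Ω, TOrbit β T →
      (∃ T' : Set Ω, TOrbit γ T' ∧ (T ∩ T').Nonempty) ∧
      (∀ T1 T2 T3 : Set Ω, TOrbit γ T1 → TOrbit γ T2 → TOrbit γ T3 →
        (T ∩ T1).Nonempty → (T ∩ T2).Nonempty → (T ∩ T3).Nonempty →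
        T1 = T2 ∨ T1 = T3 ∨ T2 = T3)) ∧
    (∀ T' : Set Ω, TOrbit γ T' →
      (∃ T : Set Ω, TOrbit β T ∧ (T ∩ T').Nonempty) ∧
      (∀ T1 T2 T3 : Set Ω, TOrbit β T1 → TOrbit β T2 → TOrbit β T3 →
        (T1 ∩ T').Nonempty → (T2 ∩ T').Nonempty → (T3 ∩ T').Nonempty →
        T1 = T2 ∨ T1 = T3 ∨ T2 = T3)) ∧
    (∀ T T' : Set Ω, TOrbit β T → TOrbit γ T' →
      ({S : Set Ω | TOrbit γ S ∧ (T ∩ S).Nonempty} = {T'} ↔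
       {S : Set Ω | TOrbit β S ∧ (S ∩ T').Nonempty} = {T})) :=
  involutions_order_three_transposition_orbits_general β γ hβ2 hγ2 h3
end

section
/- For every n ≥ 3, there exists an injective group endomorphism φ of Houghton's group H_n with φ(g_i) = g_i² for all i ∈ {2,…,n}, and φ is not surjective. In particular, H_n is not co-Hopfian. -/
/-!
Blow every point of `X_n` up into two, `(j, p) ↦ {(j, 2p - 1), (j, 2p)}` (positions from 1),
and let `φ(g)` move each pair as `g` moves its point, keeping a marked bit. This is an injective endomorphism
of `Sym(X_n)` that doubles translation vectors, hence preserves `H_n`; it is not onto because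
its image preserves the bit, while the transposition of `(1,1)` and `(1,2)` does not.
Since `g_i²` carries `(1,1), (1,2)` to `(i,2), (i,1)` respectively, the bit is parity on the
first ray and opposite parity on the other rays; with this choice `φ(g_i) = g_i²`.
-/

namespace Equiv

variable {α β γ : Type*}

def inflateHom (e : α ≃ β × γ) : Perm β →* Perm α :=
  e.symm.permCongrHom.toMonoidHom.comp
    { toFun := fun g => g.prodCongr (Equiv.refl γ)
      map_one' := by ext <;> rfl
      map_mul' := fun _ _ => by ext <;> rfl }

theorem inflateHom_apply (e : α ≃ β × γ) (g : Perm β) (x : α) :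
    e.inflateHom g x = e.symm (g (e x).1, (e x).2) :=
  rfl

theorem apply_inflateHom_apply (e : α ≃ β × γ) (g : Perm β) (x : α) :
    e (e.inflateHom g x) = (g (e x).1, (e x).2) := by
  rw [inflateHom_apply, apply_symm_apply]

theorem inflateHom_injective [Nonempty γ] (e : α ≃ β × γ) : Function.Injective e.inflateHom := by
  intro g g' hgg'
  ext b
  obtain ⟨c⟩ := ‹Nonempty γ›
  have key := congrArg (fun h : Perm α => e (h (e.symm (b, c)))) hgg'
  simp only [apply_inflateHom_apply, apply_symm_apply, Prod.mk.injEq] at key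
  rw [key.1]

theorem swap_notMem_range_inflateHom [DecidableEq α] (e : α ≃ β × γ) {x y : α}
    (hxy : (e x).2 ≠ (e y).2) : swap x y ∉ Set.range e.inflateHom := by
  rintro ⟨g, hg⟩
  have key := congrArg Prod.snd (e.apply_inflateHom_apply g x)
  rw [hg, swap_apply_left] at key
  exact hxy key.symm

end Equiv

namespace Houghton

variable {n : ℕ}

def splitPoint (h0 : 0 < n) : XH n ≃ XH n × Fin 2 where
  toFun x := ((x.1, x.2 / 2),
    ⟨if x.1 = ray0 n h0 then x.2 % 2 else 1 - x.2 % 2, by split_ifs <;> omega⟩)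
  invFun y := (y.1.1, 2 * y.1.2 + if y.1.1 = ray0 n h0 then y.2.val else 1 - y.2.val)
  left_inv := by
    rintro ⟨j, q⟩
    simp only [Prod.mk.injEq, true_and]
    split_ifs <;> omega
  right_inv := by
    rintro ⟨⟨j, p⟩, b⟩
    simp only [Prod.mk.injEq, Fin.ext_iff, true_and]
    split_ifs <;> omega

def double (h0 : 0 < n) : Equiv.Perm (XH n) →* Equiv.Perm (XH n) :=
  (splitPoint h0).inflateHom

theorem hasTranslationVector_double (h0 : 0 < n) {g : Equiv.Perm (XH n)} {m : Fin n → ℤ}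
    (hg : HasTranslationVector g m) : HasTranslationVector (double h0 g) (2 • m) := by
  obtain ⟨K, hK⟩ := hg
  refine ⟨(K ×ˢ Finset.univ).image (splitPoint h0).symm, fun x hx => ?_⟩
  have hblock : (splitPoint h0 x).1 ∉ K := fun hmem =>
    hx (Finset.mem_image.mpr ⟨splitPoint h0 x, by simpa using hmem, by simp⟩)
  obtain ⟨hray, hpos⟩ := hK _ hblock
  rw [double, Equiv.inflateHom_apply]
  obtain ⟨j, q⟩ := x
  simp only [splitPoint, Equiv.coe_fn_mk, Equiv.coe_fn_symm_mk] at hray hpos ⊢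
  simp only [hray, Pi.smul_apply, nsmul_eq_mul, true_and]
  split_ifs <;> push_cast <;> omega

theorem double_gGen (h0 : 0 < n) (i : Fin n) (hi : i ≠ ray0 n h0) :
    double h0 (gGen n h0 i hi) = gGen n h0 i hi ^ 2 := by
  ext ⟨j, q⟩ : 1
  rw [double, Equiv.inflateHom_apply]
  simp only [splitPoint, gGen, gFun, Equiv.coe_fn_mk, Equiv.coe_fn_symm_mk, pow_two,
    Equiv.Perm.mul_apply]
  split_ifs <;> simp_all [Prod.ext_iff] <;> omega

def doubleHom (h0 : 0 < n) : Houghton n →* Houghton n :=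
  ((double h0).comp (Houghton n).subtype).codRestrict (Houghton n) fun g =>
    let ⟨m, hm⟩ := g.2
    ⟨2 • m, hasTranslationVector_double h0 hm⟩

theorem doubleHom_injective (h0 : 0 < n) : Function.Injective (doubleHom h0) :=
  fun _ _ h => Subtype.ext ((splitPoint h0).inflateHom_injective (congrArg Subtype.val h))

theorem doubleHom_not_surjective (h0 : 0 < n) : ¬ Function.Surjective (doubleHom h0) := by
  intro hsurj
  obtain ⟨g, hg⟩ := hsurj (hSwap (ray0 n h0, 0) (ray0 n h0, 1))
  refine (splitPoint h0).swap_notMem_range_inflateHom ?_ ⟨g.1, congrArg Subtype.val hg⟩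
  simp [splitPoint]

end Houghton

theorem houghton_not_coHopfian_general (n : ℕ) (h0 : 0 < n) :
    ∃ φ : Houghton n →* Houghton n, Function.Injective φ ∧
      (∀ (i : Fin n) (hi : i ≠ ray0 n h0),
        φ (hGen n h0 i hi) = hGen n h0 i hi ^ 2) ∧
      ¬ Function.Surjective φ :=
  ⟨Houghton.doubleHom h0, Houghton.doubleHom_injective h0,
    fun i hi => Subtype.ext (Houghton.double_gGen h0 i hi), Houghton.doubleHom_not_surjective h0⟩

/-- For every `n ≥ 3` there is an injective endomorphism `φ` of
`H_n` with `φ(g_i) = g_i²` for all `i ∈ {2,…,n}` which is not surjective; in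
particular `H_n` is not co-Hopfian. -/
theorem houghton_not_coHopfian (n : ℕ) (hn : 3 ≤ n) (h0 : 0 < n) :
    ∃ φ : Houghton n →* Houghton n, Function.Injective φ ∧
      (∀ (i : Fin n) (hi : i ≠ ray0 n h0),
        φ (hGen n h0 i hi) = hGen n h0 i hi ^ 2) ∧
      ¬ Function.Surjective φ :=
  houghton_not_coHopfian_general n h0
end
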